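/- Let G be a hole-free and paraglider-free graph and A an induced subgraph of G isomorphic to the complement of C6. Then no vertex outside A has exactly four or exactly five neighbors in A. -/
import Mathlib


open SimpleGraph

/-- `H` occurs as an induced subgraph of `G`. -/
def HasInducedCopy {V W : Type} (G : SimpleGraph V) (H : SimpleGraph W) : Prop :=
  Nonempty (H ↪g G)

/-- `G` has no induced chordless cycle with at least 5 vertices. -/
def HoleFree {V : Type} (G : SimpleGraph V) : Prop :=
  ∀ n : ℕ, 5 ≤ n → ¬ HasInducedCopy G (cycleGraph n)

/-- the disjoint union of a `P₂` and a `P₃`. -/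
def p2p3 : SimpleGraph (Fin 5) :=
  SimpleGraph.fromRel (fun i j => (i, j) ∈ ([(0,1),(2,3),(3,4)] : List (Fin 5 × Fin 5)))

/-- the paraglider: a diamond on `0,1,2,3` (missing edge `2-3`) plus vertex `4` seeing `2,3`. -/
def paraglider : SimpleGraph (Fin 5) :=
  SimpleGraph.fromRel
    (fun i j => (i, j) ∈ ([(0,1),(0,2),(0,3),(1,2),(1,3),(4,2),(4,3)] : List (Fin 5 × Fin 5)))

/-- the diamond `K₄ - e`. -/
def diamond : SimpleGraph (Fin 4) :=
  SimpleGraph.fromRel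
    (fun i j => (i, j) ∈ ([(0,1),(0,2),(0,3),(1,2),(1,3)] : List (Fin 4 × Fin 4)))

/-- three independent edges. -/
def threeK2 : SimpleGraph (Fin 6) :=
  SimpleGraph.fromRel (fun i j => (i, j) ∈ ([(0,1),(2,3),(4,5)] : List (Fin 6 × Fin 6)))

/-- the matched co-bipartite graph: two cliques of size `k` joined by a perfect matching. -/
def matchedCoBip (k : ℕ) : SimpleGraph (Fin k ⊕ Fin k) :=
  SimpleGraph.fromRel (fun x y =>
    (∃ i j, x = Sum.inl i ∧ y = Sum.inl j) ∨ (∃ i j, x = Sum.inr i ∧ y = Sum.inr j) ∨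
    (∃ i, x = Sum.inl i ∧ y = Sum.inr i))

/-- `G` has no induced hole and no induced antihole. -/
def WeaklyChordal {V : Type} (G : SimpleGraph V) : Prop :=
  ∀ n : ℕ, 5 ≤ n →
    ¬ HasInducedCopy G (cycleGraph n) ∧ ¬ HasInducedCopy G (cycleGraph n)ᶜ

/-- a clique `K` whose removal disconnects the graph. -/
def HasCliqueSeparator {V : Type} (G : SimpleGraph V) : Prop :=
  ∃ K : Set V, G.IsClique K ∧ ¬ (G.induce Kᶜ).Preconnected

/-- an atom: a connected graph with no clique separator. -/
def IsAtomGraph {V : Type} (G : SimpleGraph V) : Prop :=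
  G.Connected ∧ ¬ HasCliqueSeparator G

instance : DecidableRel ((cycleGraph 6)ᶜ).Adj :=
  fun _ _ => inferInstanceAs (Decidable (_ ∧ _))

instance : DecidableRel paraglider.Adj := fun _ _ =>
  inferInstanceAs (Decidable (_ ∧ (_ ∨ _)))

/-- Auxiliary: a paraglider appears if `x` misses `f m` but sees `f (m+2)`, `f (m+3)`,
`f (m+5)`. -/
lemma lemA {V : Type} {G : SimpleGraph V} (f : (cycleGraph 6)ᶜ ↪g G)
    {x : V} (hx : x ∉ Set.range ⇑f) (m : Fin 6)
    (h2 : G.Adj x (f (m+2))) (h3 : G.Adj x (f (m+3))) (h5 : G.Adj x (f (m+5)))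
    (h0 : ¬ G.Adj x (f (m+0))) : HasInducedCopy G paraglider := by
  have hxf : ∀ k, x ≠ f k := fun k h => hx ⟨k, h.symm⟩
  have hf : ∀ i j : Fin 6, G.Adj (f i) (f j) ↔ ((cycleGraph 6)ᶜ).Adj i j :=
    fun i j => f.map_adj_iff
  have cyc : ∀ m : Fin 6, ((cycleGraph 6)ᶜ).Adj (m+5) (m+2) ∧ ((cycleGraph 6)ᶜ).Adj (m+5) (m+3)
      ∧ ((cycleGraph 6)ᶜ).Adj (m+0) (m+2) ∧ ((cycleGraph 6)ᶜ).Adj (m+0) (m+3)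
      ∧ ¬ ((cycleGraph 6)ᶜ).Adj (m+5) (m+0) ∧ ¬ ((cycleGraph 6)ᶜ).Adj (m+2) (m+3) := by decide
  have c52 : G.Adj (f (m+5)) (f (m+2)) := (hf _ _).mpr (cyc m).1
  have c53 : G.Adj (f (m+5)) (f (m+3)) := (hf _ _).mpr (cyc m).2.1
  have c02 : G.Adj (f (m+0)) (f (m+2)) := (hf _ _).mpr (cyc m).2.2.1
  have c03 : G.Adj (f (m+0)) (f (m+3)) := (hf _ _).mpr (cyc m).2.2.2.1
  have n50 : ¬ G.Adj (f (m+5)) (f (m+0)) := fun h => (cyc m).2.2.2.2.1 ((hf _ _).mp h)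
  have n23 : ¬ G.Adj (f (m+2)) (f (m+3)) := fun h => (cyc m).2.2.2.2.2 ((hf _ _).mp h)
  let v : Fin 5 → V := ![x, f (m+5), f (m+2), f (m+3), f (m+0)]
  refine ⟨⟨⟨v, ?_⟩, ?_⟩⟩
  · intro a b hab
    fin_cases a <;> fin_cases b <;>
      simp only [v, Matrix.cons_val', Matrix.cons_val_zero, Matrix.cons_val_one,
        Matrix.head_cons, Matrix.cons_val_two, Matrix.tail_cons, Matrix.cons_val_three,
        Matrix.cons_val_four, Matrix.cons_val_fin_one, Fin.isValue] at hab <;>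
      first
        | rfl
        | exact absurd hab (hxf _)
        | exact absurd hab.symm (hxf _)
        | exact absurd (add_left_cancel (f.injective hab)) (by decide)
  · intro a b
    fin_cases a <;> fin_cases b <;>
      simp only [v, Matrix.cons_val', Matrix.cons_val_zero, Matrix.cons_val_one,
        Matrix.head_cons, Matrix.cons_val_two, Matrix.tail_cons, Matrix.cons_val_three,
        Matrix.cons_val_four, Matrix.cons_val_fin_one, Fin.isValue] <;>
      first
        | exact iff_of_false (G.irrefl) (by decide)
        | exact iff_of_true h5 (by decide)
        | exact iff_of_true h2 (by decide)
        | exact iff_of_true h3 (by decide)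
        | exact iff_of_true h5.symm (by decide)
        | exact iff_of_true h2.symm (by decide)
        | exact iff_of_true h3.symm (by decide)
        | exact iff_of_true c52 (by decide)
        | exact iff_of_true c53 (by decide)
        | exact iff_of_true c02 (by decide)
        | exact iff_of_true c03 (by decide)
        | exact iff_of_true c52.symm (by decide)
        | exact iff_of_true c53.symm (by decide)
        | exact iff_of_true c02.symm (by decide)
        | exact iff_of_true c03.symm (by decide)
        | exact iff_of_false h0 (by decide)
        | exact iff_of_false (fun h => h0 h.symm) (by decide)
        | exact iff_of_false n50 (by decide)
        | exact iff_of_false (fun h => n50 h.symm) (by decide)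
        | exact iff_of_false n23 (by decide)
        | exact iff_of_false (fun h => n23 h.symm) (by decide)

/-- Auxiliary: an induced `C₅` appears if `x` sees `f (m+1)`, `f (m+2)` and misses
`f m`, `f (m+3)`. -/
lemma lemB {V : Type} {G : SimpleGraph V} (f : (cycleGraph 6)ᶜ ↪g G)
    {x : V} (hx : x ∉ Set.range ⇑f) (m : Fin 6)
    (h1 : G.Adj x (f (m+1))) (h2 : G.Adj x (f (m+2)))
    (h0 : ¬ G.Adj x (f (m+0))) (h3 : ¬ G.Adj x (f (m+3))) :
    HasInducedCopy G (cycleGraph 5) := by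
  have hxf : ∀ k, x ≠ f k := fun k h => hx ⟨k, h.symm⟩
  have hf : ∀ i j : Fin 6, G.Adj (f i) (f j) ↔ ((cycleGraph 6)ᶜ).Adj i j :=
    fun i j => f.map_adj_iff
  have cyc : ∀ m : Fin 6, ((cycleGraph 6)ᶜ).Adj (m+2) (m+0) ∧ ((cycleGraph 6)ᶜ).Adj (m+0) (m+3)
      ∧ ((cycleGraph 6)ᶜ).Adj (m+3) (m+1) ∧ ¬ ((cycleGraph 6)ᶜ).Adj (m+2) (m+3)
      ∧ ¬ ((cycleGraph 6)ᶜ).Adj (m+2) (m+1) ∧ ¬ ((cycleGraph 6)ᶜ).Adj (m+0) (m+1) := by decide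
  have c20 : G.Adj (f (m+2)) (f (m+0)) := (hf _ _).mpr (cyc m).1
  have c03 : G.Adj (f (m+0)) (f (m+3)) := (hf _ _).mpr (cyc m).2.1
  have c31 : G.Adj (f (m+3)) (f (m+1)) := (hf _ _).mpr (cyc m).2.2.1
  have n23 : ¬ G.Adj (f (m+2)) (f (m+3)) := fun h => (cyc m).2.2.2.1 ((hf _ _).mp h)
  have n21 : ¬ G.Adj (f (m+2)) (f (m+1)) := fun h => (cyc m).2.2.2.2.1 ((hf _ _).mp h)
  have n01 : ¬ G.Adj (f (m+0)) (f (m+1)) := fun h => (cyc m).2.2.2.2.2 ((hf _ _).mp h)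
  let v : Fin 5 → V := ![x, f (m+2), f (m+0), f (m+3), f (m+1)]
  refine ⟨⟨⟨v, ?_⟩, ?_⟩⟩
  · intro a b hab
    fin_cases a <;> fin_cases b <;>
      simp only [v, Matrix.cons_val', Matrix.cons_val_zero, Matrix.cons_val_one,
        Matrix.head_cons, Matrix.cons_val_two, Matrix.tail_cons, Matrix.cons_val_three,
        Matrix.cons_val_four, Matrix.cons_val_fin_one, Fin.isValue] at hab <;>
      first
        | rfl
        | exact absurd hab (hxf _)
        | exact absurd hab.symm (hxf _)
        | exact absurd (add_left_cancel (f.injective hab)) (by decide)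
  · intro a b
    fin_cases a <;> fin_cases b <;>
      simp only [v, Matrix.cons_val', Matrix.cons_val_zero, Matrix.cons_val_one,
        Matrix.head_cons, Matrix.cons_val_two, Matrix.tail_cons, Matrix.cons_val_three,
        Matrix.cons_val_four, Matrix.cons_val_fin_one, Fin.isValue] <;>
      first
        | exact iff_of_false (G.irrefl) (by decide)
        | exact iff_of_true h1 (by decide)
        | exact iff_of_true h2 (by decide)
        | exact iff_of_true h1.symm (by decide)
        | exact iff_of_true h2.symm (by decide)
        | exact iff_of_true c20 (by decide)
        | exact iff_of_true c03 (by decide)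
        | exact iff_of_true c31 (by decide)
        | exact iff_of_true c20.symm (by decide)
        | exact iff_of_true c03.symm (by decide)
        | exact iff_of_true c31.symm (by decide)
        | exact iff_of_false h0 (by decide)
        | exact iff_of_false (fun h => h0 h.symm) (by decide)
        | exact iff_of_false h3 (by decide)
        | exact iff_of_false (fun h => h3 h.symm) (by decide)
        | exact iff_of_false n23 (by decide)
        | exact iff_of_false (fun h => n23 h.symm) (by decide)
        | exact iff_of_false n21 (by decide)
        | exact iff_of_false (fun h => n21 h.symm) (by decide)
        | exact iff_of_false n01 (by decide)
        | exact iff_of_false (fun h => n01 h.symm) (by decide)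

/-- no vertex outside `A` has exactly four or exactly five neighbors in `A`. -/
theorem A4_A5_empty {V : Type} (G : SimpleGraph V)
    (hHole : HoleFree G) (hPara : ¬ HasInducedCopy G paraglider)
    (f : (cycleGraph 6)ᶜ ↪g G)
    (x : V) (hx : x ∉ Set.range ⇑f) :
    {i : Fin 6 | G.Adj x (f i)}.ncard ≠ 4 ∧ {i : Fin 6 | G.Adj x (f i)}.ncard ≠ 5 := by
  set S : Set (Fin 6) := {i : Fin 6 | G.Adj x (f i)} with hS
  have htot : S.ncard + Sᶜ.ncard = 6 := by
    rw [Set.ncard_add_ncard_compl]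
    simp
  constructor
  · intro h4
    have hc2 : Sᶜ.ncard = 2 := by omega
    obtain ⟨a, b, hab, hcompl⟩ := Set.ncard_eq_two.mp hc2
    have hmem : ∀ k : Fin 6, ¬ G.Adj x (f k) ↔ (k = a ∨ k = b) := by
      intro k
      have := Set.ext_iff.mp hcompl k
      simpa [hS, Set.mem_compl_iff] using this
    have key : ∀ a b : Fin 6, a ≠ b →
        (∃ c : Fin 6, (c = a ∨ c = b) ∧ (c+2 ≠ a ∧ c+2 ≠ b) ∧ (c+3 ≠ a ∧ c+3 ≠ b) ∧
          (c+5 ≠ a ∧ c+5 ≠ b)) ∨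
        (b = a + 3 ∧ (a+1 ≠ a ∧ a+1 ≠ b) ∧ (a+2 ≠ a ∧ a+2 ≠ b)) := by decide
    have hadj : ∀ k : Fin 6, k ≠ a → k ≠ b → G.Adj x (f k) := by
      intro k h1 h2
      by_contra h
      rcases (hmem k).mp h with h' | h' <;> simp_all
    rcases key a b hab with ⟨c, hc, ⟨h2a, h2b⟩, ⟨h3a, h3b⟩, ⟨h5a, h5b⟩⟩ | ⟨hb, ⟨h1a, h1b⟩, ⟨h2a, h2b⟩⟩
    · exact hPara (lemA f hx c (hadj _ h2a h2b) (hadj _ h3a h3b) (hadj _ h5a h5b)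
        ((hmem (c+0)).mpr (by simpa using hc)))
    · refine hHole 5 le_rfl (lemB f hx a (hadj _ h1a h1b) (hadj _ h2a h2b)
        ((hmem (a+0)).mpr (by simp)) ((hmem (a+3)).mpr (by simp [hb])))
  · intro h5
    have hc1 : Sᶜ.ncard = 1 := by omega
    obtain ⟨a, hcompl⟩ := Set.ncard_eq_one.mp hc1
    have hmem : ∀ k : Fin 6, ¬ G.Adj x (f k) ↔ k = a := by
      intro k
      have := Set.ext_iff.mp hcompl k
      simpa [hS, Set.mem_compl_iff] using this
    have hadj : ∀ k : Fin 6, k ≠ a → G.Adj x (f k) := by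
      intro k h1
      by_contra h
      exact h1 ((hmem k).mp h)
    have key : ∀ a : Fin 6, a+2 ≠ a ∧ a+3 ≠ a ∧ a+5 ≠ a := by decide
    exact hPara (lemA f hx a (hadj _ (key a).1) (hadj _ (key a).2.1) (hadj _ (key a).2.2)
      ((hmem (a+0)).mpr (by simp)))
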